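/- arXiv:1205.2761 — 2 statements merged into one kernel-verified Lean document; each statement's English description precedes it below -/
import Mathlib

section
/- Let m ≥ 1 and set ε = 10⁻¹⁰ · m⁻². Let ψ, φ ∈ ℂ^m ⊗ ℂ³ be unit vectors in decomposed form with amplitudes (α_i, β_{i,j}) and (α'_i, β'_{i,j}) respectively. Suppose R_eq = 1 − ½(1 + |⟨ψ, φ⟩|²) ≤ ε, R_sv = Σ_{i<m} Σ_{j≠j'} |α_i|² |β_{i,j}|² |α'_i|² |β'_{i,j'}|² ≤ ε, and the uniformity rejection probability R_unif(ψ) = ‖((I_m − u_m u_m*) ⊗ u₃u₃*) ψ‖² ≤ ε. Then for every i < m, |α_i|² ≥ 1/(100m). -/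
/-!
Write `D_k` for the probability that independent samples of `|β_k|²` and `|β'_k|²` give different
colours. The equality test forces `∑_k (|α_k| - |α'_k|)² ≤ 4ε`, so a vertex that is heavy in `ψ` is
heavy in `φ` too, and there the same-vertex test bounds `D_k`; hence `∑_k |α_k|² D_k ≤ 1/50`.
Small `D_k` means that `β_k` is concentrated on one colour (the colour of largest amplitude carries
mass `≥ 1 - D_k`), so `|∑_j β_{k,j}|² ≥ (1 - D_k)/2 - 3 D_k`, and `t_k := α_k ∑_j β_{k,j}` has
`∑_k |t_k|² ≥ 2/5`. The uniformity test says that `t` is `ℓ²`-close to its mean; so if one `|t_i|`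
were small, the mean, and with it all of `t`, would be small.
-/

noncomputable def toEuc {ι : Type*} [Fintype ι] (f : ι → ℂ) : EuclideanSpace ℂ ι := WithLp.toLp 2 f

open Finset

section Norms

variable {ι E : Type*} [SeminormedAddCommGroup E]

lemma norm_sq_le_two_mul_norm_sq_add (x y : E) :
    ‖x‖ ^ 2 ≤ 2 * ‖y‖ ^ 2 + 2 * ‖x - y‖ ^ 2 := by
  have h := pow_le_pow_left₀ (norm_nonneg x) (norm_le_norm_add_norm_sub' x y) 2
  linarith [add_sq_le (a := ‖y‖) (b := ‖x - y‖)]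

lemma norm_sum_sq_le_card_mul (s : Finset ι) (f : ι → E) :
    ‖∑ i ∈ s, f i‖ ^ 2 ≤ #s * ∑ i ∈ s, ‖f i‖ ^ 2 :=
  (pow_le_pow_left₀ (norm_nonneg _) (norm_sum_le _ _) 2).trans (sq_sum_le_card_mul_sum_sq ..)

variable [Fintype ι]

lemma sum_norm_sq_le_card_mul_norm_sq_add (t : ι → E) (c : E) (i : ι) :
    ∑ k, ‖t k‖ ^ 2
      ≤ 4 * Fintype.card ι * ‖t i‖ ^ 2 + (4 * Fintype.card ι + 2) * ∑ k, ‖t k - c‖ ^ 2 := by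
  have hsum : ∑ k, ‖t k‖ ^ 2 ≤ 2 * Fintype.card ι * ‖c‖ ^ 2 + 2 * ∑ k, ‖t k - c‖ ^ 2 := by
    calc ∑ k, ‖t k‖ ^ 2 ≤ ∑ k, (2 * ‖c‖ ^ 2 + 2 * ‖t k - c‖ ^ 2) :=
          sum_le_sum fun k _ => norm_sq_le_two_mul_norm_sq_add (t k) c
      _ = _ := by
        simp only [sum_add_distrib, ← mul_sum, sum_const, card_univ, nsmul_eq_mul]; ring
  have hc : ‖c‖ ^ 2 ≤ 2 * ‖t i‖ ^ 2 + 2 * ∑ k, ‖t k - c‖ ^ 2 := by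
    have hi : ‖t i - c‖ ^ 2 ≤ ∑ k, ‖t k - c‖ ^ 2 :=
      single_le_sum (f := fun k => ‖t k - c‖ ^ 2) (fun _ _ => sq_nonneg _) (mem_univ i)
    have := norm_sq_le_two_mul_norm_sq_add c (t i)
    rw [norm_sub_rev] at this
    linarith
  have hcard : (0 : ℝ) ≤ Fintype.card ι := Nat.cast_nonneg _
  nlinarith

end Norms

section OffDiag

variable {κ ι E F : Type*} [Fintype κ] [Fintype ι] [DecidableEq ι]

def offDiagWeight [Norm E] [Norm F] (b : ι → E) (c : ι → F) : ℝ :=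
  ∑ j, ∑ j', if j = j' then 0 else ‖b j‖ ^ 2 * ‖c j'‖ ^ 2

lemma sum_ite_ne_eq_sum_offDiagWeight [Norm E] [Norm F] (α : κ → E) (α' : κ → F)
    (β : κ → ι → E) (β' : κ → ι → F) :
    ∑ i, ∑ j, ∑ j', (if j = j' then 0 else ‖α i‖ ^ 2 * ‖β i j‖ ^ 2 * ‖α' i‖ ^ 2 * ‖β' i j'‖ ^ 2)
      = ∑ i, ‖α i‖ ^ 2 * ‖α' i‖ ^ 2 * offDiagWeight (β i) (β' i) := by
  simp only [offDiagWeight, mul_sum, mul_ite, mul_zero]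
  exact sum_congr rfl fun i _ => sum_congr rfl fun j _ => sum_congr rfl fun j' _ => by
    split_ifs <;> ring

lemma offDiagWeight_eq [Norm E] [Norm F] (b : ι → E) (c : ι → F) :
    offDiagWeight b c
      = (∑ j, ‖b j‖ ^ 2) * (∑ j, ‖c j‖ ^ 2) - ∑ j, ‖b j‖ ^ 2 * ‖c j‖ ^ 2 := by
  rw [offDiagWeight, sum_mul_sum, ← sum_sub_distrib]
  refine sum_congr rfl fun j _ => ?_
  rw [← sum_erase_add _ _ (mem_univ j), ← sum_erase_add _ _ (mem_univ j), if_pos rfl,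
    sum_congr rfl fun j' hj' => if_neg (ne_of_mem_erase hj').symm]
  ring

lemma offDiagWeight_nonneg [Norm E] [Norm F] (b : ι → E) (c : ι → F) :
    0 ≤ offDiagWeight b c :=
  sum_nonneg fun _ _ => sum_nonneg fun _ _ => by split_ifs <;> positivity

lemma offDiagWeight_le_one [Norm E] [Norm F] {b : ι → E} {c : ι → F}
    (hb : ∑ j, ‖b j‖ ^ 2 = 1) (hc : ∑ j, ‖c j‖ ^ 2 = 1) : offDiagWeight b c ≤ 1 := by
  rw [offDiagWeight_eq, hb, hc]
  have : 0 ≤ ∑ j, ‖b j‖ ^ 2 * ‖c j‖ ^ 2 := by positivity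
  linarith

lemma le_norm_sum_sq_of_offDiagWeight [SeminormedAddCommGroup E] [Norm F] {b : ι → E}
    {c : ι → F} (hb : ∑ j, ‖b j‖ ^ 2 = 1) (hc : ∑ j, ‖c j‖ ^ 2 = 1) :
    (1 - offDiagWeight b c) / 2 - Fintype.card ι * offDiagWeight b c ≤ ‖∑ j, b j‖ ^ 2 := by
  have hne : (univ : Finset ι).Nonempty := by
    by_contra h
    simp [not_nonempty_iff_eq_empty.mp h] at hb
  obtain ⟨j₀, -, hmax⟩ := exists_max_image univ (fun j => ‖b j‖) hne
  have hpeak : 1 - offDiagWeight b c ≤ ‖b j₀‖ ^ 2 := by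
    calc 1 - offDiagWeight b c = ∑ j, ‖b j‖ ^ 2 * ‖c j‖ ^ 2 := by
          rw [offDiagWeight_eq, hb, hc]; ring
      _ ≤ ∑ j, ‖b j₀‖ ^ 2 * ‖c j‖ ^ 2 := by
          gcongr with j hj
          exact hmax j hj
      _ = ‖b j₀‖ ^ 2 := by rw [← mul_sum, hc, mul_one]
  have htail : ‖∑ j ∈ univ.erase j₀, b j‖ ^ 2 ≤ Fintype.card ι * offDiagWeight b c := by
    calc ‖∑ j ∈ univ.erase j₀, b j‖ ^ 2 ≤ #(univ.erase j₀) * ∑ j ∈ univ.erase j₀, ‖b j‖ ^ 2 :=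
          norm_sum_sq_le_card_mul _ _
      _ ≤ Fintype.card ι * offDiagWeight b c := by
          have hrest : ∑ j ∈ univ.erase j₀, ‖b j‖ ^ 2 = 1 - ‖b j₀‖ ^ 2 := by
            rw [← hb, ← sum_erase_add _ _ (mem_univ j₀), add_sub_cancel_right]
          rw [hrest]
          gcongr
          · rw [← hrest]; positivity
          · exact_mod_cast card_le_univ _
          · linarith
  have hsplit := norm_sq_le_two_mul_norm_sq_add (b j₀) (∑ j, b j)
  rw [← sum_erase_add _ _ (mem_univ j₀), sub_add_cancel_right, norm_neg] at hsplit
  rw [← sum_erase_add _ _ (mem_univ j₀)]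
  linarith

lemma le_sum_mul_norm_sum_sq [SeminormedAddCommGroup E] [Norm F] (w : κ → ℝ)
    (hw0 : ∀ k, 0 ≤ w k) (hw : ∑ k, w k = 1)
    {b : κ → ι → E} {c : κ → ι → F}
    (hb : ∀ k, ∑ j, ‖b k j‖ ^ 2 = 1) (hc : ∀ k, ∑ j, ‖c k j‖ ^ 2 = 1) :
    1 / 2 - (Fintype.card ι + 1 / 2) * ∑ k, w k * offDiagWeight (b k) (c k)
      ≤ ∑ k, w k * ‖∑ j, b k j‖ ^ 2 :=
  calc 1 / 2 - (Fintype.card ι + 1 / 2) * ∑ k, w k * offDiagWeight (b k) (c k)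
      = ∑ k, (w k / 2 - (Fintype.card ι + 1 / 2) * (w k * offDiagWeight (b k) (c k))) := by
        rw [sum_sub_distrib, ← sum_div, hw, ← mul_sum]
    _ = ∑ k, w k * ((1 - offDiagWeight (b k) (c k)) / 2
          - Fintype.card ι * offDiagWeight (b k) (c k)) :=
        sum_congr rfl fun k _ => by ring
    _ ≤ ∑ k, w k * ‖∑ j, b k j‖ ^ 2 :=
        sum_le_sum fun k _ =>
          mul_le_mul_of_nonneg_left (le_norm_sum_sq_of_offDiagWeight (hb k) (hc k)) (hw0 k)

end OffDiag

lemma sq_mul_le_add_div_mul {a a' d θ : ℝ} (hd0 : 0 ≤ d) (hd1 : d ≤ 1) (hθ : 0 < θ)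
    (hclose : (a - a') ^ 2 ≤ θ / 4) :
    a ^ 2 * d ≤ θ + 4 / θ * (a ^ 2 * a' ^ 2 * d) := by
  rcases le_or_gt (a ^ 2) θ with hlight | hheavy
  · have : 0 ≤ 4 / θ * (a ^ 2 * a' ^ 2 * d) := by positivity
    nlinarith
  · have ha' : θ / 4 ≤ a' ^ 2 := by
      have := norm_sq_le_two_mul_norm_sq_add a a'
      simp only [Real.norm_eq_abs, sq_abs] at this
      linarith
    have : a ^ 2 * d ≤ 4 / θ * (a ^ 2 * a' ^ 2 * d) := by
      rw [div_mul_eq_mul_div, le_div_iff₀ hθ]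
      nlinarith [mul_le_mul_of_nonneg_left ha' (mul_nonneg (sq_nonneg a) hd0)]
    linarith

lemma sum_sq_mul_le {κ : Type*} [Fintype κ] {a a' d : κ → ℝ} {θ : ℝ} (hθ : 0 < θ)
    (hd0 : ∀ k, 0 ≤ d k) (hd1 : ∀ k, d k ≤ 1) (hclose : ∀ k, (a k - a' k) ^ 2 ≤ θ / 4) :
    ∑ k, a k ^ 2 * d k ≤ Fintype.card κ * θ + 4 / θ * ∑ k, a k ^ 2 * a' k ^ 2 * d k :=
  calc ∑ k, a k ^ 2 * d k ≤ ∑ k, (θ + 4 / θ * (a k ^ 2 * a' k ^ 2 * d k)) :=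
        sum_le_sum fun k _ => sq_mul_le_add_div_mul (hd0 k) (hd1 k) hθ (hclose k)
    _ = Fintype.card κ * θ + 4 / θ * ∑ k, a k ^ 2 * a' k ^ 2 * d k := by
        rw [sum_add_distrib, ← mul_sum, sum_const, card_univ, nsmul_eq_mul]

section Amplitudes

variable {κ ι E F : Type*} [Fintype κ] [Fintype ι]

lemma sum_norm_mul_norm_le_one [Norm E] [Norm F] {b : ι → E} {c : ι → F}
    (hb : ∑ j, ‖b j‖ ^ 2 = 1) (hc : ∑ j, ‖c j‖ ^ 2 = 1) : ∑ j, ‖b j‖ * ‖c j‖ ≤ 1 := by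
  have h := sum_le_sum fun j (_ : j ∈ univ) => two_mul_le_add_sq ‖b j‖ ‖c j‖
  simp only [sum_add_distrib, hb, hc, mul_assoc, ← mul_sum] at h
  linarith

lemma sum_sq_norm_sub_norm [Norm E] {α α' : κ → E} (hα : ∑ k, ‖α k‖ ^ 2 = 1)
    (hα' : ∑ k, ‖α' k‖ ^ 2 = 1) :
    ∑ k, (‖α k‖ - ‖α' k‖) ^ 2 = 2 - 2 * ∑ k, ‖α k‖ * ‖α' k‖ := by
  simp only [sub_sq, sum_add_distrib, sum_sub_distrib, hα, hα', mul_assoc, ← mul_sum]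
  ring

variable {𝕜 : Type*} [RCLike 𝕜]

lemma norm_sum_conj_mul_le {α α' : κ → 𝕜} {β β' : κ → ι → 𝕜}
    (hβ : ∀ k, ∑ j, ‖β k j‖ ^ 2 = 1) (hβ' : ∀ k, ∑ j, ‖β' k j‖ ^ 2 = 1) :
    ‖∑ k, ∑ j, starRingEnd 𝕜 (α k * β k j) * (α' k * β' k j)‖ ≤ ∑ k, ‖α k‖ * ‖α' k‖ := by
  refine (norm_sum_le _ _).trans (sum_le_sum fun k _ => ?_)
  calc ‖∑ j, starRingEnd 𝕜 (α k * β k j) * (α' k * β' k j)‖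
      ≤ ∑ j, ‖starRingEnd 𝕜 (α k * β k j) * (α' k * β' k j)‖ := norm_sum_le _ _
    _ = ‖α k‖ * ‖α' k‖ * ∑ j, ‖β k j‖ * ‖β' k j‖ := by
        rw [mul_sum]
        exact sum_congr rfl fun j _ => by simp only [norm_mul, RCLike.norm_conj]; ring
    _ ≤ ‖α k‖ * ‖α' k‖ := by
        have := sum_norm_mul_norm_le_one (hβ k) (hβ' k)
        have : 0 ≤ ‖α k‖ * ‖α' k‖ := by positivity
        nlinarith

lemma sq_norm_sub_norm_le_of_overlap {α α' : κ → 𝕜} {β β' : κ → ι → 𝕜} {ε : ℝ}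
    (hα : ∑ k, ‖α k‖ ^ 2 = 1) (hα' : ∑ k, ‖α' k‖ ^ 2 = 1)
    (hβ : ∀ k, ∑ j, ‖β k j‖ ^ 2 = 1) (hβ' : ∀ k, ∑ j, ‖β' k j‖ ^ 2 = 1)
    (hoverlap : 1 - 1 / 2 * (1 +
      ‖∑ k, ∑ j, starRingEnd 𝕜 (α k * β k j) * (α' k * β' k j)‖ ^ 2) ≤ ε) (k : κ) :
    (‖α k‖ - ‖α' k‖) ^ 2 ≤ 4 * ε := by
  set p := ‖∑ k, ∑ j, starRingEnd 𝕜 (α k * β k j) * (α' k * β' k j)‖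
  have hp : p ≤ ∑ k, ‖α k‖ * ‖α' k‖ := norm_sum_conj_mul_le hβ hβ'
  have hsum := sum_sq_norm_sub_norm hα hα'
  have hsum0 : 0 ≤ ∑ k, (‖α k‖ - ‖α' k‖) ^ 2 := by positivity
  have hp0 : 0 ≤ p := norm_nonneg _
  calc (‖α k‖ - ‖α' k‖) ^ 2 ≤ ∑ k, (‖α k‖ - ‖α' k‖) ^ 2 :=
        single_le_sum (f := fun k => (‖α k‖ - ‖α' k‖) ^ 2) (fun _ _ => sq_nonneg _) (mem_univ k)
    _ ≤ 4 * ε := by nlinarith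

lemma sum_sq_norm_mul_offDiagWeight_le [DecidableEq ι] {α α' : κ → 𝕜} {β β' : κ → ι → 𝕜}
    {ε θ : ℝ} (hα : ∑ k, ‖α k‖ ^ 2 = 1) (hα' : ∑ k, ‖α' k‖ ^ 2 = 1)
    (hβ : ∀ k, ∑ j, ‖β k j‖ ^ 2 = 1) (hβ' : ∀ k, ∑ j, ‖β' k j‖ ^ 2 = 1)
    (hoverlap : 1 - 1 / 2 * (1 +
      ‖∑ k, ∑ j, starRingEnd 𝕜 (α k * β k j) * (α' k * β' k j)‖ ^ 2) ≤ ε)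
    (hsv : ∑ k, ‖α k‖ ^ 2 * ‖α' k‖ ^ 2 * offDiagWeight (β k) (β' k) ≤ ε)
    (hθ : 0 < θ) (hεθ : 16 * ε ≤ θ) :
    ∑ k, ‖α k‖ ^ 2 * offDiagWeight (β k) (β' k) ≤ Fintype.card κ * θ + 4 / θ * ε := by
  refine (sum_sq_mul_le (a := fun k => ‖α k‖) (a' := fun k => ‖α' k‖) hθ
    (fun k => offDiagWeight_nonneg _ _)
    (fun k => offDiagWeight_le_one (hβ k) (hβ' k)) fun k => ?_).trans ?_
  · linarith [sq_norm_sub_norm_le_of_overlap hα hα' hβ hβ' hoverlap k]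
  · gcongr

lemma norm_mul_sum_sq_le (a : 𝕜) (b : ι → 𝕜) :
    ‖a * ∑ j, b j‖ ^ 2 ≤ Fintype.card ι * ‖a‖ ^ 2 * ∑ j, ‖b j‖ ^ 2 := by
  calc ‖a * ∑ j, b j‖ ^ 2 = ‖a‖ ^ 2 * ‖∑ j, b j‖ ^ 2 := by rw [norm_mul, mul_pow]
    _ ≤ ‖a‖ ^ 2 * (Fintype.card ι * ∑ j, ‖b j‖ ^ 2) := by
        gcongr
        simpa using norm_sum_sq_le_card_mul univ b
    _ = Fintype.card ι * ‖a‖ ^ 2 * ∑ j, ‖b j‖ ^ 2 := by ring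

end Amplitudes

lemma norm_sq_toEuc_sub_mean {κ : Type*} [Fintype κ] (t : κ → ℂ) (n : ℂ) :
    ‖toEuc (fun q : κ × Fin 3 => (1 / 3 : ℂ) * t q.1 - 1 / (3 * n) * ∑ i, t i)‖ ^ 2
      = 1 / 3 * ∑ k, ‖t k - (∑ i, t i) / n‖ ^ 2 := by
  have hterm : ∀ k, (1 / 3 : ℂ) * t k - 1 / (3 * n) * ∑ i, t i = 1 / 3 * (t k - (∑ i, t i) / n) :=
    fun k => by ring
  simp only [EuclideanSpace.norm_sq_eq, toEuc, Fintype.sum_prod_type]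
  simp only [hterm, norm_mul, mul_pow, sum_const, card_univ, Fintype.card_fin, nsmul_eq_mul]
  rw [mul_sum]
  refine sum_congr rfl fun k _ => ?_
  norm_num
  ring

/-- **Lemma (all vertices appear with large amplitude).**
Set `ε = 10⁻¹⁰ m⁻²`. If the equality-test rejection probability `R_eq`, the
same-vertex rejection probability `R_sv`, and the uniformity-test rejection
probability `R_unif(ψ) = ‖((I_m − u_m u_m*) ⊗ u₃u₃*) ψ‖²` are all at most `ε`,
then every vertex amplitude satisfies `|α_i|² ≥ 1/(100 m)`. Here
`((I_m − u_m u_m*) ⊗ u₃u₃*) ψ` has coordinates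
`(i, j) ↦ (1/3) α_i (Σ_{j'} β_{i,j'}) − (1/(3m)) Σ_{i'} α_{i'} (Σ_{j'} β_{i',j'})`. -/
theorem all_vertices_appear (m : ℕ) (hm : 1 ≤ m)
    (α α' : Fin m → ℂ) (β β' : Fin m → Fin 3 → ℂ)
    (hα : ∑ i, ‖α i‖ ^ 2 = 1)
    (hα' : ∑ i, ‖α' i‖ ^ 2 = 1)
    (hβ : ∀ i, ∑ j, ‖β i j‖ ^ 2 = 1)
    (hβ' : ∀ i, ∑ j, ‖β' i j‖ ^ 2 = 1)
    (hReq : 1 - (1 / 2 : ℝ) * (1 +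
        ‖∑ i, ∑ j, (starRingEnd ℂ) (α i * β i j) * (α' i * β' i j)‖ ^ 2)
      ≤ 1 / (10 ^ 10 * (m : ℝ) ^ 2))
    (hRsv : ∑ i, ∑ j, ∑ j', (if j = j' then 0 else
        ‖α i‖ ^ 2 * ‖β i j‖ ^ 2 *
          ‖α' i‖ ^ 2 * ‖β' i j'‖ ^ 2)
      ≤ 1 / (10 ^ 10 * (m : ℝ) ^ 2))
    (hRunif : ‖toEuc (fun q : Fin m × Fin 3 =>
          (1 / 3 : ℂ) * (α q.1 * ∑ j', β q.1 j')
            - (1 / (3 * (m : ℂ))) * ∑ i', (α i' * ∑ j', β i' j'))‖ ^ 2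
      ≤ 1 / (10 ^ 10 * (m : ℝ) ^ 2)) :
    ∀ i : Fin m, ‖α i‖ ^ 2 ≥ 1 / (100 * (m : ℝ)) := by
  intro i
  set ε : ℝ := 1 / (10 ^ 10 * (m : ℝ) ^ 2) with hε
  have hm1 : (1 : ℝ) ≤ m := by exact_mod_cast hm
  have hεm : ε * m ≤ 1 / 10 ^ 10 := by
    rw [hε, div_mul_eq_mul_div, div_le_div_iff₀ (by positivity) (by positivity)]; nlinarith
  rw [sum_ite_ne_eq_sum_offDiagWeight] at hRsv
  have hδ : ∑ k, ‖α k‖ ^ 2 * offDiagWeight (β k) (β' k) ≤ 1 / 50 := by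
    refine (sum_sq_norm_mul_offDiagWeight_le (θ := 1 / (100 * m)) hα hα' hβ hβ' hReq hRsv
      (by positivity) ?_).trans ?_
    · rw [le_div_iff₀ (by positivity)]; nlinarith
    · rw [Fintype.card_fin, mul_one_div, div_div_eq_mul_div, div_one]
      have : (m : ℝ) / (100 * m) = 1 / 100 := by field_simp
      nlinarith
  set t : Fin m → ℂ := fun k => α k * ∑ j, β k j
  have hmass : 2 / 5 ≤ ∑ k, ‖t k‖ ^ 2 := by
    have := le_sum_mul_norm_sum_sq (fun k => ‖α k‖ ^ 2) (fun _ => by positivity) hα hβ hβ'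
    simp only [Fintype.card_fin, Nat.cast_ofNat] at this
    simp only [t, norm_mul, mul_pow]
    linarith
  have hmean : ∑ k, ‖t k - (∑ i, t i) / m‖ ^ 2 ≤ 3 * ε := by
    rw [norm_sq_toEuc_sub_mean t] at hRunif; linarith
  have hti : ‖t i‖ ^ 2 ≤ 3 * ‖α i‖ ^ 2 := by
    simpa only [Fintype.card_fin, Nat.cast_ofNat, hβ i, mul_one]
      using norm_mul_sum_sq_le (α i) (β i)
  have hspread := sum_norm_sq_le_card_mul_norm_sq_add t ((∑ i, t i) / m) i
  rw [Fintype.card_fin] at hspread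
  rw [ge_iff_le, div_le_iff₀ (by positivity)]
  nlinarith
end

section
/- Let m ≥ 1 and let ψ ∈ ℂ^m ⊗ ℂ³ be a unit vector written as ψ = Σ_{v<m} α_v e_v ⊗ (Σ_{j<3} β_{v,j} f_j) with Σ_v |α_v|² = 1 and Σ_j |β_{v,j}|² = 1 for every v. Suppose that p := ‖(I_m ⊗ u₃u₃*) ψ‖² ≥ 1/12 and that ‖((I_m − u_m u_m*) ⊗ u₃u₃*) ψ‖² ≤ 1/(200 m²). Then for every v < m, |α_v|² ≥ 1/(24 m). -/
/-!
Put `γ_v = α_v Σ_j β_{v,j}`, so that the projection of `ψ` onto the uniform color is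
`Σ_v (γ_v/√3) e_v ⊗ u₃`. The bound on `p` says `Σ_v |γ_v|² ≥ 1/4`, and the rejection bound says that `γ`
deviates from its mean `μ` by `Σ_v |γ_v - μ|² ≤ 3/(200 m²)`. The variance identity
`m |μ|² = Σ_v |γ_v|² - Σ_v |γ_v - μ|²` then gives `|μ|² ≥ 47/(200 m)`, while each single deviation
satisfies `|γ_v - μ|² ≤ 3/(200 m)`; since `√47 - √3 > 5`, every `|γ_v|² ≥ 25/(200 m) = 1/(8 m)`.
Finally Cauchy–Schwarz and `Σ_j |β_{v,j}|² = 1` give `|γ_v|² ≤ 3 |α_v|²`.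
-/

open Finset

section Mean

variable {ι 𝕜 E : Type*} [RCLike 𝕜] [NormedAddCommGroup E] [InnerProductSpace 𝕜 E]

theorem sum_norm_sub_mean_sq (s : Finset ι) (x : ι → E) :
    ∑ i ∈ s, ‖x i - (#s : 𝕜)⁻¹ • ∑ j ∈ s, x j‖ ^ 2 =
      ∑ i ∈ s, ‖x i‖ ^ 2 - ‖∑ i ∈ s, x i‖ ^ 2 / #s := by
  set S := ∑ j ∈ s, x j
  have hinner : RCLike.re (inner 𝕜 S ((#s : 𝕜)⁻¹ • S)) = ‖S‖ ^ 2 / #s := by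
    rw [inner_smul_right, inner_self_eq_norm_sq_to_K, ← RCLike.ofReal_natCast,
      ← RCLike.ofReal_inv, ← RCLike.ofReal_pow, ← RCLike.ofReal_mul, RCLike.ofReal_re]
    ring
  have hnorm : ‖(#s : 𝕜)⁻¹ • S‖ = ‖S‖ / #s := by
    rw [norm_smul, norm_inv, RCLike.norm_natCast, inv_mul_eq_div]
  have hcross : ∑ i ∈ s, 2 * RCLike.re (inner 𝕜 (x i) ((#s : 𝕜)⁻¹ • S)) = 2 * (‖S‖ ^ 2 / #s) := by
    rw [← mul_sum, ← map_sum, ← sum_inner, hinner]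
  simp only [norm_sub_sq (𝕜 := 𝕜), sum_add_distrib, sum_sub_distrib, hcross, sum_const,
    nsmul_eq_mul, hnorm]
  rcases (#s).eq_zero_or_pos with hs | hs
  · simp [hs]
  · field_simp
    ring

theorem le_norm_sq_of_sum_norm_sub_mean_sq_le [Fintype ι] (x : ι → E) (v : ι)
    (hx : 1 / 4 ≤ ∑ i, ‖x i‖ ^ 2)
    (hdev : ∑ i, ‖x i - (Fintype.card ι : 𝕜)⁻¹ • ∑ j, x j‖ ^ 2 ≤
      3 / (200 * (Fintype.card ι : ℝ) ^ 2)) :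
    1 / (8 * Fintype.card ι) ≤ ‖x v‖ ^ 2 := by
  have hvar := sum_norm_sub_mean_sq (𝕜 := 𝕜) univ x
  rw [card_univ] at hvar
  have hn : (1 : ℝ) ≤ Fintype.card ι := by exact_mod_cast Fintype.card_pos_iff.mpr ⟨v⟩
  set n : ℝ := ((Fintype.card ι : ℕ) : ℝ)
  set S := ∑ j, x j
  set μ := (Fintype.card ι : 𝕜)⁻¹ • S
  set c := 1 / (200 * n)
  have hdev' : 3 / (200 * n ^ 2) ≤ 3 * c := by
    rw [mul_one_div]; gcongr; nlinarith
  have hS : 47 / 200 ≤ ‖S‖ ^ 2 / n := by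
    have : 3 / (200 * n ^ 2) ≤ 3 / 200 := by gcongr; nlinarith
    linarith
  have hμ : 47 * c ≤ ‖μ‖ ^ 2 := by
    have : ‖μ‖ ^ 2 = ‖S‖ ^ 2 / n / n := by
      rw [norm_smul, norm_inv, RCLike.norm_natCast]; ring
    rw [this, show 47 * c = 47 / 200 / n by ring]
    gcongr
  have hdev_v : ‖x v - μ‖ ^ 2 ≤ 3 * c :=
    (single_le_sum (fun i _ => by positivity) (mem_univ v)).trans (hdev.trans hdev')
  have htri : ‖μ‖ ≤ ‖x v‖ + ‖x v - μ‖ := norm_le_norm_add_norm_sub _ _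
  rw [show 1 / (8 * n) = 25 * c by ring]
  -- `‖μ‖ ≥ √(47 c)`, `‖x v - μ‖ ≤ √(3 c)` and `(√47 - √3) ^ 2 > 25`
  nlinarith [sq_nonneg (7 * ‖x v‖ - 20 * ‖x v - μ‖), mul_self_le_mul_self (norm_nonneg μ) htri]

end Mean

theorem norm_sum_sq_le_card_mul_sum_norm_sq {ι E : Type*} [SeminormedAddCommGroup E]
    (s : Finset ι) (z : ι → E) : ‖∑ i ∈ s, z i‖ ^ 2 ≤ #s * ∑ i ∈ s, ‖z i‖ ^ 2 :=
  (pow_le_pow_left₀ (norm_nonneg _) (norm_sum_le s z) 2).trans sq_sum_le_card_mul_sum_sq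

theorem norm_sq_toEuc_comp_fst {ι κ : Type*} [Fintype ι] [Fintype κ] (f : ι → ℂ) :
    ‖toEuc (fun q : ι × κ => f q.1)‖ ^ 2 = Fintype.card κ * ∑ i, ‖f i‖ ^ 2 := by
  rw [toEuc, EuclideanSpace.norm_sq_eq, Fintype.sum_prod_type, mul_sum]
  simp

theorem chen_drucker_all_vertices_general (m : ℕ)
    (α : Fin m → ℂ) (β : Fin m → Fin 3 → ℂ)
    (hβ : ∀ v, ∑ j, ‖β v j‖ ^ 2 = 1)
    (hp : ‖toEuc (fun q : Fin m × Fin 3 =>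
        (1 / 3 : ℂ) * (α q.1 * ∑ j', β q.1 j'))‖ ^ 2 ≥ 1 / 12)
    (hRunif : ‖toEuc (fun q : Fin m × Fin 3 =>
          (1 / 3 : ℂ) * (α q.1 * ∑ j', β q.1 j')
            - (1 / (3 * (m : ℂ))) * ∑ v', (α v' * ∑ j', β v' j'))‖ ^ 2
      ≤ 1 / (200 * (m : ℝ) ^ 2)) :
    ∀ v : Fin m, ‖α v‖ ^ 2 ≥ 1 / (24 * (m : ℝ)) := by
  intro v
  set γ : Fin m → ℂ := fun w => α w * ∑ j, β w j
  have hthird : ‖(1 / 3 : ℂ)‖ ^ 2 = 1 / 9 := by norm_num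
  have hγ : 1 / 4 ≤ ∑ w, ‖γ w‖ ^ 2 := by
    rw [norm_sq_toEuc_comp_fst (fun w => 1 / 3 * γ w)] at hp
    simp only [norm_mul, mul_pow, ← mul_sum, Fintype.card_fin, hthird] at hp
    linarith
  have hdev : ∑ w, ‖γ w - (m : ℂ)⁻¹ * ∑ w', γ w'‖ ^ 2 ≤ 3 / (200 * (m : ℝ) ^ 2) := by
    have hm : (m : ℂ) ≠ 0 := Nat.cast_ne_zero.mpr v.pos.ne'
    have : (fun q : Fin m × Fin 3 => 1 / 3 * γ q.1 - 1 / (3 * (m : ℂ)) * ∑ w, γ w) =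
        fun q => 1 / 3 * (γ q.1 - (m : ℂ)⁻¹ * ∑ w, γ w) := by
      ext q; field_simp
    rw [this, norm_sq_toEuc_comp_fst (fun w => 1 / 3 * (γ w - (m : ℂ)⁻¹ * ∑ w', γ w'))] at hRunif
    simp only [norm_mul, mul_pow, ← mul_sum, Fintype.card_fin, hthird] at hRunif
    rw [show 3 / (200 * (m : ℝ) ^ 2) = 3 * (1 / (200 * (m : ℝ) ^ 2)) by ring]
    linarith
  have hγv := le_norm_sq_of_sum_norm_sub_mean_sq_le (𝕜 := ℂ) γ v hγ
  simp only [Fintype.card_fin, smul_eq_mul] at hγv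
  have hβv : ‖∑ j, β v j‖ ^ 2 ≤ 3 := by
    simpa [hβ v] using norm_sum_sq_le_card_mul_sum_norm_sq univ (β v)
  calc 1 / (24 * (m : ℝ)) = 1 / (8 * m) / 3 := by ring
    _ ≤ ‖γ v‖ ^ 2 / 3 := by gcongr; exact hγv hdev
    _ = ‖α v‖ ^ 2 * ‖∑ j, β v j‖ ^ 2 / 3 := by simp only [γ, norm_mul, mul_pow]
    _ ≤ ‖α v‖ ^ 2 * 3 / 3 := by gcongr
    _ = ‖α v‖ ^ 2 := by ring

/-- **Lemma (Chen–Drucker, all vertices appear).**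
Let `ψ = Σ_v α_v e_v ⊗ (Σ_j β_{v,j} f_j) ∈ ℂ^m ⊗ ℂ³` be a unit vector. If the
color register yields the uniform-projection outcome with probability
`p = ‖(I_m ⊗ u₃u₃*) ψ‖² ≥ 1/12` and the Uniformity-Test rejection probability
satisfies `‖((I_m − u_m u_m*) ⊗ u₃u₃*) ψ‖² ≤ 1/(200 m²)`, then every vertex
amplitude satisfies `|α_v|² ≥ 1/(24 m)`. -/
theorem chen_drucker_all_vertices (m : ℕ) (hm : 1 ≤ m)
    (α : Fin m → ℂ) (β : Fin m → Fin 3 → ℂ)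
    (hα : ∑ v, ‖α v‖ ^ 2 = 1)
    (hβ : ∀ v, ∑ j, ‖β v j‖ ^ 2 = 1)
    (hp : ‖toEuc (fun q : Fin m × Fin 3 =>
        (1 / 3 : ℂ) * (α q.1 * ∑ j', β q.1 j'))‖ ^ 2 ≥ 1 / 12)
    (hRunif : ‖toEuc (fun q : Fin m × Fin 3 =>
          (1 / 3 : ℂ) * (α q.1 * ∑ j', β q.1 j')
            - (1 / (3 * (m : ℂ))) * ∑ v', (α v' * ∑ j', β v' j'))‖ ^ 2
      ≤ 1 / (200 * (m : ℝ) ^ 2)) :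
    ∀ v : Fin m, ‖α v‖ ^ 2 ≥ 1 / (24 * (m : ℝ)) :=
  chen_drucker_all_vertices_general m α β hβ hp hRunif
end
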